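/- Let s > 1. There exists a constant C > 0, depending only on s and independent of k and L, such that (1/L) Σ_{ξ∈2πℤ/L} m(ξ)⁻² ≤ C. -/

import Mathlib

open scoped Classical BigOperators ENNReal

noncomputable section

/-- Japanese bracket `⟨x⟩ = (1 + x²)^{1/2}`. -/
def jap (x : ℝ) : ℝ := Real.sqrt (1 + x ^ 2)

/-- The frequency `ξ = 2πn/L ∈ 2πℤ/L`. -/
def freq (L : ℕ) (n : ℤ) : ℝ := 2 * Real.pi * (n : ℝ) / (L : ℝ)

/-- `τ` is an admissible `𝒩_r`-reduced residue for the integer `M` (where `ξ = 2π(M + j/L)`,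
`M = kη̃ + τ̃` with `η̃ ∈ {0,1,3,4}` and `−k/2 < τ̃ ≤ k/2`). -/
def NrWitness (k : ℝ) (M : ℤ) (τ : ℤ) : Prop :=
  ∃ η : ℤ, (η = 0 ∨ η = 1 ∨ η = 3 ∨ η = 4) ∧
    (M : ℝ) = k * (η : ℝ) + (τ : ℝ) ∧ -(k / 2) < (τ : ℝ) ∧ (τ : ℝ) ≤ k / 2

/-- The multiplier `m(ξ)` for `ξ = 2πn/L`, written via `n = L·M + j`, `0 ≤ j < L`:
`m(ξ) = ⟨τ̃⟩^(s−1/2)` on `𝒩_r`, `⟨k⟩^(s−1/2)` on `𝒩_l \ 𝒩_r`,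
`⟨k⟩^(s−1/2)⟨τ⟩^(1/2)` resp. `⟨k⟩^(s−1/2)⟨k−τ⟩^(1/2)` on `𝒩_m` with `ξ > 0` resp. `ξ < 0`,
and `⟨ξ⟩^s` on `𝒩_h`, where `M = kη + τ`, `0 ≤ τ < k`. -/
def mult (s k : ℝ) (L : ℕ) (n : ℤ) : ℝ :=
  let M : ℤ := Int.ediv n (L : ℤ)
  if h : ∃ τ : ℤ, NrWitness k M τ then jap ((h.choose : ℤ) : ℝ) ^ (s - 1 / 2)
  else
    let η : ℤ := ⌊(M : ℝ) / k⌋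
    let τ : ℝ := (M : ℝ) - k * (η : ℝ)
    if -99 ≤ η ∧ η ≤ 98 then jap k ^ (s - 1 / 2)
    else if η = 99 ∨ η = -100 then
      if 0 < n then jap k ^ (s - 1 / 2) * jap τ ^ ((1 : ℝ) / 2)
      else if n < 0 then jap k ^ (s - 1 / 2) * jap (k - τ) ^ ((1 : ℝ) / 2)
      else jap (freq L n) ^ s
    else jap (freq L n) ^ s

/-!
Write `ξ = 2π(M + j/L)` with block index `M = ⌊n/L⌋` and `0 ≤ j < L`. Each of the four regimes of
`m(ξ)⁻²` is dominated by a weight depending on `M` alone, so the sum over `ξ` is `L` times a sum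
over `M`, and each weight is summable uniformly in `k`:
* on `𝒩_r` the map `M ↦ (η̃, τ̃)` is injective with `η̃` in a four-element set, giving at most
  four copies of `∑ ⟨τ⟩^(1-2s)`;
* on `𝒩_l ∪ 𝒩_m` the weight is `⟨k⟩^(1-2s) ≤ ⟨k⟩⁻¹`, supported on the `≤ 200k + 1` blocks with
  `|M| ≤ 100k`;
* on `𝒩_h`, `|ξ| ≥ |n/L|` bounds `⟨ξ⟩^(-2s)` by its values at the two ends of the block.
-/

namespace PeriodicMultiplier

open Function

lemma one_le_jap (x : ℝ) : 1 ≤ jap x :=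
  Real.one_le_sqrt.mpr (by nlinarith [sq_nonneg x])

lemma jap_pos (x : ℝ) : 0 < jap x := one_pos.trans_le (one_le_jap x)

lemma abs_le_jap (x : ℝ) : |x| ≤ jap x := by
  rw [jap, ← Real.sqrt_sq_eq_abs]
  exact Real.sqrt_le_sqrt (by linarith)

lemma jap_le_jap {x y : ℝ} (h : |x| ≤ |y|) : jap x ≤ jap y :=
  Real.sqrt_le_sqrt (add_le_add_right (sq_le_sq.mpr h) 1)

lemma jap_rpow_neg_le_of_abs_le {x y p : ℝ} (hp : 0 ≤ p) (h : |x| ≤ |y|) :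
    jap y ^ (-p) ≤ jap x ^ (-p) :=
  Real.rpow_le_rpow_of_nonpos (jap_pos x) (jap_le_jap h) (neg_nonpos.mpr hp)

lemma jap_rpow_neg_le_inv {p : ℝ} (hp : 1 ≤ p) (x : ℝ) : jap x ^ (-p) ≤ (jap x)⁻¹ := by
  rw [← Real.rpow_neg_one]
  exact Real.rpow_le_rpow_of_exponent_le (one_le_jap x) (by linarith)

lemma one_div_rpow_sq {x : ℝ} (hx : 0 < x) (a : ℝ) : 1 / (x ^ a) ^ 2 = x ^ (-(2 * a)) := by
  rw [← Real.rpow_natCast, ← Real.rpow_mul hx.le, Real.rpow_neg hx.le, one_div]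
  norm_num [mul_comm]

lemma summable_jap_rpow_neg {p : ℝ} (hp : 1 < p) : Summable fun n : ℤ => jap n ^ (-p) := by
  refine Summable.of_norm_bounded_eventually (Real.summable_abs_int_rpow hp) ?_
  filter_upwards [Filter.eventually_cofinite_ne 0] with n hn
  rw [Real.norm_of_nonneg (Real.rpow_nonneg (jap_pos _).le _)]
  exact Real.rpow_le_rpow_of_nonpos (by positivity) (abs_le_jap _) (by linarith)

lemma tsum_ofReal_jap_rpow_neg_ne_top {p : ℝ} (hp : 1 < p) :
    ∑' n : ℤ, ENNReal.ofReal (jap n ^ (-p)) ≠ ⊤ := by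
  rw [← ENNReal.ofReal_tsum_of_nonneg (fun n : ℤ => Real.rpow_nonneg (jap_pos n).le _)
    (summable_jap_rpow_neg hp)]
  exact ENNReal.ofReal_ne_top

lemma jap_rpow_neg_le_of_mem_Icc {p x : ℝ} (hp : 0 ≤ p) {M : ℤ}
    (hx : x ∈ Set.Icc (M : ℝ) (M + 1)) :
    jap x ^ (-p) ≤ jap M ^ (-p) + jap ((M + 1 : ℤ) : ℝ) ^ (-p) := by
  obtain ⟨hMx, hxM⟩ := hx
  rcases le_or_gt 0 M with hM | hM
  · have hM' : (0 : ℝ) ≤ M := by exact_mod_cast hM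
    have := jap_rpow_neg_le_of_abs_le hp (abs_le_abs_of_nonneg hM' hMx)
    linarith [Real.rpow_nonneg (jap_pos ((M + 1 : ℤ) : ℝ)).le (-p)]
  · have hM' : ((M + 1 : ℤ) : ℝ) ≤ 0 := by exact_mod_cast hM
    have := jap_rpow_neg_le_of_abs_le hp (abs_le_abs_of_nonpos hM' (by push_cast; exact hxM))
    linarith [Real.rpow_nonneg (jap_pos (M : ℝ)).le (-p)]

lemma floor_intCast_div_natCast (n : ℤ) (L : ℕ) : ⌊(n : ℝ) / L⌋ = n / L := by
  rw [← Rat.floor_intCast_div_natCast, ← Rat.floor_cast (α := ℝ)]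
  push_cast
  rfl

lemma tsum_comp_ediv (L : ℕ) [NeZero L] (f : ℤ → ℝ≥0∞) :
    ∑' n : ℤ, f (n / L) = L * ∑' M, f M := by
  calc ∑' n : ℤ, f (n / L) = ∑' p : ℤ × Fin L, f p.1 := (Int.divModEquiv L).tsum_eq (f ·.1)
    _ = ∑' M, L * f M := by rw [ENNReal.tsum_prod (f := fun M _ => f M)]; simp
    _ = L * ∑' M, f M := ENNReal.tsum_mul_left

lemma card_Ico_ceil_neg_ceil_le {a : ℝ} (ha : 0 ≤ a) :
    ((Finset.Ico ⌈-a⌉ ⌈a⌉).card : ℝ) ≤ 2 * a + 1 := by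
  have hnn : 0 ≤ ⌈a⌉ - ⌈-a⌉ := by
    rw [Int.ceil_neg, sub_neg_eq_add]
    positivity
  rw [Int.card_Ico, ← Int.cast_natCast, Int.toNat_of_nonneg hnn, Int.cast_sub, Int.ceil_neg,
    Int.cast_neg]
  linarith [Int.ceil_lt_add_one a, Int.floor_le a]

section Weights

variable (s k : ℝ)

def nrWeight (M : ℤ) : ℝ≥0∞ :=
  if h : ∃ τ : ℤ, NrWitness k M τ then ENNReal.ofReal (jap h.choose ^ (-(2 * s - 1))) else 0

def midWeight (M : ℤ) : ℝ≥0∞ :=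
  if -100 ≤ ⌊(M : ℝ) / k⌋ ∧ ⌊(M : ℝ) / k⌋ ≤ 99 then ENNReal.ofReal (jap k ^ (-(2 * s - 1)))
  else 0

def highWeight (M : ℤ) : ℝ≥0∞ :=
  ENNReal.ofReal (jap M ^ (-(2 * s))) + ENNReal.ofReal (jap ((M + 1 : ℤ) : ℝ) ^ (-(2 * s)))

variable {s k}

lemma ofReal_one_div_sq_le_midWeight {M : ℤ} {a : ℝ} (ha : jap k ^ (s - 1 / 2) ≤ a)
    (hM : -100 ≤ ⌊(M : ℝ) / k⌋ ∧ ⌊(M : ℝ) / k⌋ ≤ 99) :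
    ENNReal.ofReal (1 / a ^ 2) ≤ midWeight s k M := by
  have hpos : 0 < jap k ^ (s - 1 / 2) := Real.rpow_pos_of_pos (jap_pos k) _
  rw [midWeight, if_pos hM, show 2 * s - 1 = 2 * (s - 1 / 2) by ring, ← one_div_rpow_sq (jap_pos k)]
  exact ENNReal.ofReal_le_ofReal (one_div_le_one_div_of_le (by positivity) (by gcongr))

lemma ofReal_one_div_sq_le_highWeight (hs : 0 ≤ s) (L : ℕ) (n : ℤ) :
    ENNReal.ofReal (1 / (jap (freq L n) ^ s) ^ 2) ≤ highWeight s (n / L) := by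
  have hx : ((n / L : ℤ) : ℝ) ≤ (n : ℝ) / L ∧ (n : ℝ) / L ≤ (n / L : ℤ) + 1 := by
    rw [← floor_intCast_div_natCast]
    exact ⟨Int.floor_le _, (Int.lt_floor_add_one _).le⟩
  have hξ : |(n : ℝ) / L| ≤ |freq L n| := by
    rw [freq, mul_div_assoc, abs_mul, abs_of_pos Real.two_pi_pos]
    exact le_mul_of_one_le_left (abs_nonneg _) (by linarith [Real.pi_gt_three])
  rw [one_div_rpow_sq (jap_pos _)]
  refine (ENNReal.ofReal_le_ofReal ((jap_rpow_neg_le_of_abs_le (by positivity) hξ).trans ?_)).trans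
    ENNReal.ofReal_add_le
  exact jap_rpow_neg_le_of_mem_Icc (by positivity) hx

lemma ofReal_one_div_mult_sq_le (hs : 0 ≤ s) (L : ℕ) (n : ℤ) :
    ENNReal.ofReal (1 / mult s k L n ^ 2) ≤
      nrWeight s k (n / L) + midWeight s k (n / L) + highWeight s (n / L) := by
  have hgrow (x : ℝ) : jap k ^ (s - 1 / 2) ≤ jap k ^ (s - 1 / 2) * jap x ^ ((1 : ℝ) / 2) :=
    le_mul_of_one_le_right (Real.rpow_pos_of_pos (jap_pos k) _).le
      (Real.one_le_rpow (one_le_jap x) (by norm_num))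
  have hhigh := ofReal_one_div_sq_le_highWeight hs L n
  rw [mult]
  dsimp only
  rw [show n.ediv L = n / L from rfl]
  split_ifs with hr hl hm
  · refine le_add_right (le_add_right ?_)
    rw [nrWeight, dif_pos hr, one_div_rpow_sq (jap_pos _), show 2 * (s - 1 / 2) = 2 * s - 1 by ring]
  · exact le_add_right (le_add_left (ofReal_one_div_sq_le_midWeight le_rfl ⟨by omega, by omega⟩))
  · exact le_add_right (le_add_left (ofReal_one_div_sq_le_midWeight (hgrow _) ⟨by omega, by omega⟩))
  · exact le_add_right (le_add_left (ofReal_one_div_sq_le_midWeight (hgrow _) ⟨by omega, by omega⟩))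
  · exact le_add_left hhigh
  · exact le_add_left hhigh

lemma tsum_nrWeight_le :
    ∑' M, nrWeight s k M ≤ 4 * ∑' τ : ℤ, ENNReal.ofReal (jap τ ^ (-(2 * s - 1))) := by
  set f : ℤ → ℝ≥0∞ := fun τ => ENNReal.ofReal (jap τ ^ (-(2 * s - 1)))
  let S := {M : ℤ | ∃ τ, NrWitness k M τ}
  let F : Finset ℤ := {0, 1, 3, 4}
  let ι : S → F × ℤ := fun M =>
    (⟨M.2.choose_spec.choose, by simpa [F] using M.2.choose_spec.choose_spec.1⟩, M.2.choose)
  have hι : Injective ι := by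
    rintro ⟨M₁, h₁⟩ ⟨M₂, h₂⟩ h
    simp only [ι, Prod.ext_iff, Subtype.ext_iff] at h
    have e₁ := h₁.choose_spec.choose_spec.2.1
    have e₂ := h₂.choose_spec.choose_spec.2.1
    have hη : (h₁.choose_spec.choose : ℝ) = h₂.choose_spec.choose := by exact_mod_cast h.1
    have hτ : (h₁.choose : ℝ) = h₂.choose := by exact_mod_cast h.2
    ext
    exact_mod_cast (by linear_combination e₁ - e₂ + k * hη + hτ : (M₁ : ℝ) = M₂)
  have hsupp : support (nrWeight s k) ⊆ S := fun M hM => by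
    by_contra h
    exact hM (by rw [nrWeight, dif_neg (show ¬∃ τ, NrWitness k M τ from h)])
  calc ∑' M, nrWeight s k M = ∑' M : S, nrWeight s k M :=
        (tsum_subtype_eq_of_support_subset hsupp).symm
    _ = ∑' M : S, f (ι M).2 :=
        tsum_congr fun M => by rw [nrWeight, dif_pos (show ∃ τ, NrWitness k M τ from M.2)]
    _ ≤ ∑' p : F × ℤ, f p.2 := ENNReal.tsum_comp_le_tsum_of_injective hι (f ·.2)
    _ = 4 * ∑' τ, f τ := by
        rw [ENNReal.tsum_prod (f := fun _ τ => f τ), tsum_fintype, Finset.sum_const,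
          Finset.card_univ, Fintype.card_coe, nsmul_eq_mul]
        rfl

lemma tsum_midWeight_le (hs : 1 ≤ s) (hk : 0 < k) : ∑' M, midWeight s k M ≤ 201 := by
  set I := Finset.Ico ⌈-(100 * k)⌉ ⌈100 * k⌉
  have hsupp : ∀ M ∉ I, midWeight s k M = 0 := by
    intro M hM
    rw [midWeight, if_neg]
    rintro ⟨hlo, hhi⟩
    apply hM
    have hlo' : -100 ≤ (M : ℝ) / k := by exact_mod_cast Int.le_floor.mp hlo
    have hhi' : (M : ℝ) / k < 100 := by
      exact_mod_cast Int.floor_lt.mp (by omega : ⌊(M : ℝ) / k⌋ < 100)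
    rw [le_div_iff₀ hk] at hlo'
    rw [div_lt_iff₀ hk] at hhi'
    simp only [I, Finset.mem_Ico, Int.ceil_le, Int.lt_ceil]
    constructor <;> linarith
  have hcard := card_Ico_ceil_neg_ceil_le (by positivity : 0 ≤ 100 * k)
  have hjap : (200 * k + 1) * (jap k)⁻¹ ≤ 201 := by
    rw [← div_eq_mul_inv, div_le_iff₀ (jap_pos k)]
    linarith [one_le_jap k, (le_abs_self k).trans (abs_le_jap k)]
  calc ∑' M, midWeight s k M = ∑ M ∈ I, midWeight s k M := tsum_eq_sum hsupp
    _ ≤ I.card • ENNReal.ofReal (jap k ^ (-(2 * s - 1))) := by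
        refine Finset.sum_le_card_nsmul _ _ _ fun M _ => ?_
        rw [midWeight]
        split_ifs <;> simp
    _ = ENNReal.ofReal (I.card * jap k ^ (-(2 * s - 1))) := by
        rw [nsmul_eq_mul, ENNReal.ofReal_mul (by positivity), ENNReal.ofReal_natCast]
    _ ≤ ENNReal.ofReal 201 := by
        refine ENNReal.ofReal_le_ofReal (le_trans ?_ hjap)
        exact mul_le_mul (by linarith) (jap_rpow_neg_le_inv (by linarith) k)
          (Real.rpow_nonneg (jap_pos k).le _) (by positivity)
    _ = 201 := by simp

lemma tsum_highWeight :
    ∑' M, highWeight s M = 2 * ∑' M : ℤ, ENNReal.ofReal (jap M ^ (-(2 * s))) := by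
  set f : ℤ → ℝ≥0∞ := fun M => ENNReal.ofReal (jap M ^ (-(2 * s)))
  have hshift : ∑' M, f (M + 1) = ∑' M, f M := (Equiv.addRight 1).tsum_eq f
  rw [two_mul]
  nth_rw 2 [← hshift]
  exact ENNReal.tsum_add

end Weights

end PeriodicMultiplier

open PeriodicMultiplier in
/-- `(1/L) Σ_ξ m(ξ)⁻² ≤ C` with `C` depending only on `s > 1`. -/
theorem stmt_15 (s : ℝ) (hs : 1 < s) :
    ∃ C : ℝ, 0 < C ∧ ∀ (L : ℕ) (k : ℝ), 0 < L → 0 < k →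
      (∃ K : ℕ, (K : ℝ) = (L : ℝ) * k) →
      ∑' n : ℤ, ENNReal.ofReal (1 / mult s k L n ^ 2) ≤
        ENNReal.ofReal (C * (L : ℝ)) := by
  set A := ∑' n : ℤ, ENNReal.ofReal (jap n ^ (-(2 * s - 1)))
  set B := ∑' n : ℤ, ENNReal.ofReal (jap n ^ (-(2 * s)))
  have hC : 4 * A + 201 + 2 * B ≠ ⊤ := by
    have := tsum_ofReal_jap_rpow_neg_ne_top (p := 2 * s - 1) (by linarith)
    have := tsum_ofReal_jap_rpow_neg_ne_top (p := 2 * s) (by linarith)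
    finiteness
  refine ⟨(4 * A + 201 + 2 * B).toReal, ENNReal.toReal_pos (by positivity) hC,
    fun L k hL hk _ => ?_⟩
  have : NeZero L := ⟨hL.ne'⟩
  calc ∑' n : ℤ, ENNReal.ofReal (1 / mult s k L n ^ 2)
      ≤ ∑' n : ℤ, (nrWeight s k (n / L) + midWeight s k (n / L) + highWeight s (n / L)) :=
        ENNReal.tsum_le_tsum fun n => ofReal_one_div_mult_sq_le (by linarith) L n
    _ = L * (∑' M, nrWeight s k M + ∑' M, midWeight s k M + ∑' M, highWeight s M) := by
        rw [tsum_comp_ediv L (fun M => nrWeight s k M + midWeight s k M + highWeight s M),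
          ENNReal.tsum_add, ENNReal.tsum_add]
    _ ≤ L * (4 * A + 201 + 2 * B) := by
        rw [tsum_highWeight]
        gcongr
        · exact tsum_nrWeight_le
        · exact tsum_midWeight_le hs.le hk
    _ = ENNReal.ofReal ((4 * A + 201 + 2 * B).toReal * L) := by
        rw [ENNReal.ofReal_mul ENNReal.toReal_nonneg, ENNReal.ofReal_toReal hC,
          ENNReal.ofReal_natCast, mul_comm]
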